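/- arXiv:2408.13722 — 8 statements merged into one kernel-verified Lean document; each statement's English description precedes it below -/
import Mathlib

section
/- Let Γ be a Neumaier graph with parameters (n,k,λ;a,c). If λ = 0, then c = 2, a = 1, and Γ is isomorphic to the complete bipartite graph K_{k,k}. Conversely, if c = 2, then a = 1, λ = 0, and Γ is isomorphic to the complete bipartite graph K_{k,k}. -/
open Finset SimpleGraph Matrix

/-- A finset `C` is a regular clique with nexus `a` in `G`: it is a clique and every
vertex outside `C` has exactly `a` neighbors in `C`. -/
def SimpleGraph.IsRegularCliqueWithNexus {V : Type*} [Fintype V] [DecidableEq V]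
    (G : SimpleGraph V) [DecidableRel G.Adj] (C : Finset V) (a : ℕ) : Prop :=
  G.IsClique (C : Set V) ∧ ∀ v ∉ C, (C.filter fun u => G.Adj v u).card = a

/-- `G` is edge-regular with parameters `(n, k, l)`: it has `n` vertices, is `k`-regular,
and any two adjacent vertices have exactly `l` common neighbors. -/
def SimpleGraph.IsEdgeRegular {V : Type*} [Fintype V] [DecidableEq V]
    (G : SimpleGraph V) [DecidableRel G.Adj] (n k l : ℕ) : Prop :=
  Fintype.card V = n ∧ G.IsRegularOfDegree k ∧
    ∀ u v : V, G.Adj u v → Fintype.card (G.commonNeighbors u v) = l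

/-- `G` is a Neumaier graph with parameters `(n, k, l; a, c)`: a connected, non-complete,
edge-regular graph with parameters `(n, k, l)` containing a regular clique of size `c`
with nexus `a ≥ 1`. -/
def SimpleGraph.IsNeumaier {V : Type*} [Fintype V] [DecidableEq V]
    (G : SimpleGraph V) [DecidableRel G.Adj] (n k l a c : ℕ) : Prop :=
  G.Connected ∧ G ≠ ⊤ ∧ G.IsEdgeRegular n k l ∧ 1 ≤ a ∧
    ∃ C : Finset V, C.card = c ∧ G.IsRegularCliqueWithNexus C a

private lemma degree_all_eq_top {V : Type*} [Fintype V] [DecidableEq V]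
    (G : SimpleGraph V) [DecidableRel G.Adj] {k : ℕ} (hreg : G.IsRegularOfDegree k)
    {w : V} (hw : ∀ v, v ≠ w → G.Adj w v) : G = ⊤ := by
  have hnw : G.neighborFinset w = Finset.univ.erase w := by
    ext v
    simp only [mem_neighborFinset, Finset.mem_erase, Finset.mem_univ, and_true]
    exact ⟨fun h => h.ne', fun h => hw v h⟩
  have hk : k = Fintype.card V - 1 := by
    rw [← hreg w, ← card_neighborFinset_eq_degree, hnw,
      Finset.card_erase_of_mem (Finset.mem_univ w), Finset.card_univ]
  have hall : ∀ u : V, G.neighborFinset u = Finset.univ.erase u := by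
    intro u
    apply Finset.eq_of_subset_of_card_le
    · intro v hv
      exact Finset.mem_erase.2 ⟨((mem_neighborFinset _ _ _).1 hv).ne', Finset.mem_univ v⟩
    · rw [card_neighborFinset_eq_degree, hreg u,
        Finset.card_erase_of_mem (Finset.mem_univ u), Finset.card_univ, ← hk]
  ext u v
  simp only [top_adj]
  constructor
  · exact fun h => h.ne
  · intro huv
    have : v ∈ G.neighborFinset u := by
      rw [hall u]
      exact Finset.mem_erase.2 ⟨fun e => huv e.symm, Finset.mem_univ v⟩
    exact (mem_neighborFinset _ _ _).1 this

private lemma key_iso {V : Type*} [Fintype V] [DecidableEq V]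
    (G : SimpleGraph V) [DecidableRel G.Adj] {k : ℕ}
    (hreg : G.IsRegularOfDegree k)
    (hl : ∀ u v : V, G.Adj u v → Fintype.card (G.commonNeighbors u v) = 0)
    {x y : V} (hxy : G.Adj x y)
    (hcover : ∀ v : V, G.Adj x v ∨ G.Adj y v) :
    Nonempty (G ≃g completeBipartiteGraph (Fin k) (Fin k)) := by
  classical
  have hnc : ∀ u v w : V, G.Adj u v → G.Adj u w → G.Adj v w → False := by
    intro u v w huv huw hvw
    have hmem : u ∈ G.commonNeighbors v w := ⟨huv.symm, huw.symm⟩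
    exact (Fintype.card_eq_zero_iff.1 (hl v w hvw)).false ⟨u, hmem⟩
  set A : Finset V := G.neighborFinset y with hA
  set B : Finset V := G.neighborFinset x with hB
  have hAmem : ∀ v, v ∈ A ↔ G.Adj y v := fun v => mem_neighborFinset G y v
  have hBmem : ∀ v, v ∈ B ↔ G.Adj x v := fun v => mem_neighborFinset G x v
  have hdisj : ∀ v, v ∈ A → v ∈ B → False := by
    intro v hvA hvB
    exact hnc v x y ((hBmem v).1 hvB).symm ((hAmem v).1 hvA).symm hxy
  have hmemB : ∀ v : V, v ∉ A → v ∈ B := by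
    intro v hv
    rcases hcover v with h | h
    · exact (hBmem v).2 h
    · exact absurd ((hAmem v).2 h) hv
  have noA : ∀ u v, u ∈ A → v ∈ A → ¬ G.Adj u v := by
    intro u v hu hv hadj
    exact hnc y u v ((hAmem u).1 hu) ((hAmem v).1 hv) hadj
  have noB : ∀ u v, u ∈ B → v ∈ B → ¬ G.Adj u v := by
    intro u v hu hv hadj
    exact hnc x u v ((hBmem u).1 hu) ((hBmem v).1 hv) hadj
  have cardA : A.card = k := by
    rw [hA, card_neighborFinset_eq_degree]; exact hreg y
  have cardB : B.card = k := by
    rw [hB, card_neighborFinset_eq_degree]; exact hreg x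
  have compl : ∀ u v, u ∈ A → v ∈ B → G.Adj u v := by
    intro u v hu hv
    have hsub : G.neighborFinset u ⊆ B := by
      intro w hw
      have hadj : G.Adj u w := (mem_neighborFinset _ _ _).1 hw
      by_cases hwA : w ∈ A
      · exact absurd hadj (noA u w hu hwA)
      · exact hmemB w hwA
    have heq : G.neighborFinset u = B := by
      apply Finset.eq_of_subset_of_card_le hsub
      rw [cardB, card_neighborFinset_eq_degree, hreg u]
    have : v ∈ G.neighborFinset u := heq ▸ hv
    exact (mem_neighborFinset _ _ _).1 this
  have eA : {v // v ∈ A} ≃ Fin k :=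
    Fintype.equivFinOfCardEq (by rw [Fintype.card_coe]; exact cardA)
  have eB : {v // v ∈ B} ≃ Fin k :=
    Fintype.equivFinOfCardEq (by rw [Fintype.card_coe]; exact cardB)
  let f : V → Fin k ⊕ Fin k := fun v =>
    if h : v ∈ A then Sum.inl (eA ⟨v, h⟩) else Sum.inr (eB ⟨v, hmemB v h⟩)
  have hinj : Function.Injective f := by
    intro u v huv
    simp only [f] at huv
    by_cases hu : u ∈ A <;> by_cases hv : v ∈ A
    · rw [dif_pos hu, dif_pos hv] at huv
      exact congrArg Subtype.val (eA.injective (Sum.inl.inj huv))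
    · rw [dif_pos hu, dif_neg hv] at huv
      exact absurd huv (by simp)
    · rw [dif_neg hu, dif_pos hv] at huv
      exact absurd huv (by simp)
    · rw [dif_neg hu, dif_neg hv] at huv
      exact congrArg Subtype.val (eB.injective (Sum.inr.inj huv))
  have hsurj : Function.Surjective f := by
    intro s
    cases s with
    | inl i =>
      refine ⟨(eA.symm i).1, ?_⟩
      have hm := (eA.symm i).2
      simp only [f, dif_pos hm]
      congr 1
      have : (⟨(eA.symm i).1, hm⟩ : {v // v ∈ A}) = eA.symm i := rfl
      rw [this, Equiv.apply_symm_apply]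
    | inr j =>
      have hm := (eB.symm j).2
      have hnA : (eB.symm j).1 ∉ A := fun h => hdisj _ h hm
      refine ⟨(eB.symm j).1, ?_⟩
      simp only [f, dif_neg hnA]
      congr 1
      have : (⟨(eB.symm j).1, hmemB _ hnA⟩ : {v // v ∈ B}) = eB.symm j := rfl
      rw [this, Equiv.apply_symm_apply]
  refine ⟨⟨Equiv.ofBijective f ⟨hinj, hsurj⟩, ?_⟩⟩
  intro u v
  show (completeBipartiteGraph (Fin k) (Fin k)).Adj (f u) (f v) ↔ G.Adj u v
  simp only [f]
  by_cases hu : u ∈ A <;> by_cases hv : v ∈ A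
  · rw [dif_pos hu, dif_pos hv]
    exact iff_of_false (by simp) (noA u v hu hv)
  · rw [dif_pos hu, dif_neg hv]
    exact iff_of_true (by simp) (compl u v hu (hmemB v hv))
  · rw [dif_neg hu, dif_pos hv]
    exact iff_of_true (by simp) (compl v u hv (hmemB u hu)).symm
  · rw [dif_neg hu, dif_neg hv]
    exact iff_of_false (by simp) (noB u v (hmemB u hu) (hmemB v hv))

private lemma main0 {V : Type*} [Fintype V] [DecidableEq V]
    (G : SimpleGraph V) [DecidableRel G.Adj] (n k a c : ℕ)
    (h : G.IsNeumaier n k 0 a c) :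
    c = 2 ∧ a = 1 ∧ Nonempty (G ≃g completeBipartiteGraph (Fin k) (Fin k)) := by
  obtain ⟨hconn, hne, ⟨hn, hreg, hcn⟩, ha, C, hC, hclique, hnexus⟩ := h
  have hnc : ∀ u v w : V, G.Adj u v → G.Adj u w → G.Adj v w → False := by
    intro u v w huv huw hvw
    have hmem : u ∈ G.commonNeighbors v w := ⟨huv.symm, huw.symm⟩
    exact (Fintype.card_eq_zero_iff.1 (hcn v w hvw)).false ⟨u, hmem⟩
  have hc2 : c = 2 := by
    rcases Nat.lt_trichotomy c 2 with hlt | heq | hgt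
    · exfalso
      interval_cases c
      · have hCe : C = ∅ := Finset.card_eq_zero.1 hC
        obtain ⟨v⟩ := hconn.nonempty
        have := hnexus v (by simp [hCe])
        simp [hCe] at this
        omega
      · obtain ⟨w, hw⟩ := Finset.card_eq_one.1 hC
        have hadj : ∀ v, v ≠ w → G.Adj w v := by
          intro v hv
          have hvC : v ∉ C := by simp [hw, hv]
          have hnx := hnexus v hvC
          have hpos : 0 < (C.filter fun u => G.Adj v u).card := by omega
          obtain ⟨u, hu⟩ := Finset.card_pos.1 hpos
          rw [hw] at hu
          simp only [Finset.mem_filter, Finset.mem_singleton] at hu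
          exact (hu.1 ▸ hu.2).symm
        exact hne (degree_all_eq_top G hreg hadj)
    · exact heq
    · exfalso
      rw [← hC] at hgt
      obtain ⟨u, v, w, hu, hv, hw, huv, huw, hvw⟩ := Finset.two_lt_card_iff.1 hgt
      exact hnc u v w (hclique (Finset.mem_coe.2 hu) (Finset.mem_coe.2 hv) huv)
        (hclique (Finset.mem_coe.2 hu) (Finset.mem_coe.2 hw) huw)
        (hclique (Finset.mem_coe.2 hv) (Finset.mem_coe.2 hw) hvw)
  obtain ⟨x, y, hxyne, hCxy⟩ := Finset.card_eq_two.1 (hC.trans hc2)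
  have hxy : G.Adj x y := hclique (by simp [hCxy]) (by simp [hCxy]) hxyne
  have hout : ∃ v, v ∉ C := by
    by_contra hno
    push_neg at hno
    apply hne
    ext u v
    simp only [top_adj]
    refine ⟨fun h => h.ne, fun huv => ?_⟩
    have hu := hno u
    have hv := hno v
    rw [hCxy] at hu hv
    simp only [Finset.mem_insert, Finset.mem_singleton] at hu hv
    rcases hu with rfl | rfl <;> rcases hv with rfl | rfl
    · exact absurd rfl huv
    · exact hxy
    · exact hxy.symm
    · exact absurd rfl huv
  have ha1 : a = 1 := by
    obtain ⟨v, hv⟩ := hout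
    have hnx := hnexus v hv
    have hle : (C.filter fun u => G.Adj v u).card ≤ 1 := by
      by_contra hgt
      push_neg at hgt
      obtain ⟨p, hp, q, hq, hpq⟩ := Finset.one_lt_card.1 hgt
      simp only [Finset.mem_filter] at hp hq
      exact hnc v p q hp.2 hq.2
        (hclique (Finset.mem_coe.2 hp.1) (Finset.mem_coe.2 hq.1) hpq)
    omega
  have hcover : ∀ v, G.Adj x v ∨ G.Adj y v := by
    intro v
    by_cases hvC : v ∈ C
    · rw [hCxy] at hvC
      simp only [Finset.mem_insert, Finset.mem_singleton] at hvC
      rcases hvC with rfl | rfl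
      · exact Or.inr hxy.symm
      · exact Or.inl hxy
    · have hnx := hnexus v hvC
      have hpos : 0 < (C.filter fun u => G.Adj v u).card := by omega
      obtain ⟨u, hu⟩ := Finset.card_pos.1 hpos
      simp only [Finset.mem_filter, hCxy, Finset.mem_insert, Finset.mem_singleton] at hu
      obtain ⟨h1, h2⟩ := hu
      rcases h1 with rfl | rfl
      · exact Or.inl h2.symm
      · exact Or.inr h2.symm
  exact ⟨hc2, ha1, key_iso G hreg hcn hxy hcover⟩

/-- Lemma 3.1: in a Neumaier graph with parameters (n,k,l;a,c), if l = 0 then c = 2, a = 1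
and the graph is the complete bipartite graph K_{k,k}; conversely if c = 2 then a = 1, l = 0
and the graph is K_{k,k}. -/
theorem neumaier_lambda_zero_or_c_two {V : Type*} [Fintype V] [DecidableEq V]
    (G : SimpleGraph V) [DecidableRel G.Adj] (n k l a c : ℕ)
    (h : G.IsNeumaier n k l a c) :
    (l = 0 → c = 2 ∧ a = 1 ∧ Nonempty (G ≃g completeBipartiteGraph (Fin k) (Fin k))) ∧
    (c = 2 → a = 1 ∧ l = 0 ∧ Nonempty (G ≃g completeBipartiteGraph (Fin k) (Fin k))) := by
  constructor
  · rintro rfl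
    exact main0 G n k a c h
  · intro hc2
    subst hc2
    obtain ⟨hconn, hne, ⟨hn, hreg, hcn⟩, ha, C, hC, hclique, hnexus⟩ := id h
    obtain ⟨x, y, hxyne, hCxy⟩ := Finset.card_eq_two.1 hC
    have hxy : G.Adj x y := hclique (by simp [hCxy]) (by simp [hCxy]) hxyne
    have hane2 : a ≠ 2 := by
      intro ha2
      apply hne
      apply degree_all_eq_top G hreg (w := x)
      intro v hv
      by_cases hvC : v ∈ C
      · rw [hCxy] at hvC
        simp only [Finset.mem_insert, Finset.mem_singleton] at hvC
        rcases hvC with rfl | rfl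
        · exact absurd rfl hv
        · exact hxy
      · have hnx := hnexus v hvC
        rw [ha2] at hnx
        have hfil : C.filter (fun u => G.Adj v u) = C :=
          Finset.eq_of_subset_of_card_le (Finset.filter_subset _ _) (by rw [hC, hnx])
        have hxf : x ∈ C.filter fun u => G.Adj v u := by
          rw [hfil, hCxy]; simp
        exact ((Finset.mem_filter.1 hxf).2).symm
    have hl0 : l = 0 := by
      have hcnxy := hcn x y hxy
      have hzero : Fintype.card (G.commonNeighbors x y) = 0 := by
        rw [Fintype.card_eq_zero_iff]
        constructor
        rintro ⟨w, hw1, hw2⟩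
        have hwC : w ∉ C := by
          rw [hCxy]
          simp only [Finset.mem_insert, Finset.mem_singleton]
          push_neg
          exact ⟨fun e => G.irrefl (e ▸ hw1), fun e => G.irrefl (e ▸ hw2)⟩
        have hnx := hnexus w hwC
        have hfil : (C.filter fun u => G.Adj w u) = C := by
          apply Finset.filter_true_of_mem
          intro u huC
          rw [hCxy] at huC
          simp only [Finset.mem_insert, Finset.mem_singleton] at huC
          rcases huC with rfl | rfl
          · exact hw1.symm
          · exact hw2.symm
        rw [hfil, hC] at hnx
        exact hane2 hnx.symm
      omega
    obtain ⟨_, ha1, hiso⟩ := main0 G n k a 2 (hl0 ▸ h)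
    exact ⟨ha1, hl0, hiso⟩
end

section
/- Let Γ be a Neumaier graph with parameters (n,k,λ;a,c), let C be a regular clique of size c with nexus a, let e ∈ C, and let S be the set of neighbors of e in Γ. Then the induced subgraph of Γ on S ∖ C is regular of valency λ − a + 1; that is, every vertex of S ∖ C has exactly λ − a + 1 neighbors inside S ∖ C. -/
/-! For `v ∈ S \ C`, the `l` common neighbours of `e` and `v` are the neighbours of `v` in `S \ C`
together with those in `C` other than `e`; as `C` is a clique through `e` and `v ~ e`, the latter
number `a - 1`. -/

open Finset SimpleGraph Matrix

namespace SimpleGraph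

variable {V : Type*} [Fintype V] {G : SimpleGraph V} [DecidableRel G.Adj]

theorem card_commonNeighbors_eq_card_filter (e v : V) :
    Fintype.card (G.commonNeighbors e v) = #((G.neighborFinset e).filter (G.Adj v)) := by
  rw [← Set.toFinset_card]
  congr 1
  ext w
  simp [mem_commonNeighbors]

variable [DecidableEq V]

theorem IsClique.neighborFinset_inter_eq_erase {C : Finset V} (hC : G.IsClique (C : Set V))
    {e : V} (he : e ∈ C) : G.neighborFinset e ∩ C = C.erase e := by
  ext w
  simp only [mem_inter, mem_neighborFinset, mem_erase]
  exact ⟨fun ⟨hew, hw⟩ => ⟨hew.ne', hw⟩, fun ⟨hwe, hw⟩ => ⟨hC he hw hwe.symm, hw⟩⟩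

theorem IsClique.card_filter_adj_neighborFinset_sdiff_add {C : Finset V}
    (hC : G.IsClique (C : Set V)) {e v : V} (he : e ∈ C) (hev : G.Adj e v) :
    #((G.neighborFinset e \ C).filter (G.Adj v)) + #(C.filter (G.Adj v)) =
      Fintype.card (G.commonNeighbors e v) + 1 := by
  have heC : e ∈ C.filter (G.Adj v) := mem_filter.2 ⟨he, hev.symm⟩
  have hsdiff : (G.neighborFinset e).filter (G.Adj v) \ C =
      (G.neighborFinset e \ C).filter (G.Adj v) := by
    ext; simp only [mem_sdiff, mem_filter]; tauto
  have hinter : (G.neighborFinset e).filter (G.Adj v) ∩ C = (C.filter (G.Adj v)).erase e := by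
    rw [filter_inter, hC.neighborFinset_inter_eq_erase he, filter_erase]
  rw [card_commonNeighbors_eq_card_filter,
    ← card_sdiff_add_card_inter ((G.neighborFinset e).filter (G.Adj v)) C, hsdiff, hinter,
    add_assoc, card_erase_add_one heC]

end SimpleGraph

theorem neumaier_induced_regular_general {V : Type*} [Fintype V] [DecidableEq V]
    (G : SimpleGraph V) [DecidableRel G.Adj] (n k l a c : ℕ)
    (h : G.IsNeumaier n k l a c)
    (C : Finset V) (hC : G.IsRegularCliqueWithNexus C a)
    (e : V) (he : e ∈ C) (S : Finset V) (hS : S = G.neighborFinset e) :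
    ∀ v ∈ S \ C, ((((S \ C).filter fun u => G.Adj v u).card : ℤ) = (l : ℤ) - a + 1) := by
  obtain ⟨-, -, ⟨-, -, hcommon⟩, -⟩ := h
  subst hS
  intro v hv
  obtain ⟨hev, hvC⟩ := mem_sdiff.1 hv
  rw [mem_neighborFinset] at hev
  have hsplit : #((G.neighborFinset e \ C).filter fun u => G.Adj v u) + a = l + 1 := by
    rw [← hC.2 v hvC, ← hcommon e v hev]
    exact hC.1.card_filter_adj_neighborFinset_sdiff_add he hev
  omega

/-- Theorem 3.3(i), first part: in a Neumaier graph with parameters (n,k,l;a,c), if C is a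
regular clique with nexus a, e ∈ C, and S is the neighborhood of e, then the induced subgraph
on S \ C is regular of valency l - a + 1. -/
theorem neumaier_induced_regular {V : Type*} [Fintype V] [DecidableEq V]
    (G : SimpleGraph V) [DecidableRel G.Adj] (n k l a c : ℕ)
    (h : G.IsNeumaier n k l a c)
    (C : Finset V) (hCcard : C.card = c) (hC : G.IsRegularCliqueWithNexus C a)
    (e : V) (he : e ∈ C) (S : Finset V) (hS : S = G.neighborFinset e) :
    ∀ v ∈ S \ C, ((((S \ C).filter fun u => G.Adj v u).card : ℤ) = (l : ℤ) - a + 1) :=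
  neumaier_induced_regular_general G n k l a c h C hC e he S hS
end

section
/- Let Γ be a vertex-transitive Neumaier graph with parameters (n,k,λ;a,c). Then Γ has diameter 2; that is, any two distinct vertices of Γ are at distance at most 2, and Γ is not complete. -/
open Finset SimpleGraph Matrix

/-- Theorem 3.3(iii), first part: a vertex-transitive Neumaier graph has diameter 2, i.e.
any two distinct vertices are at distance at most 2 and the graph is not complete. -/
theorem vertexTransitive_neumaier_diameter_two {V : Type*} [Fintype V] [DecidableEq V]
    (G : SimpleGraph V) [DecidableRel G.Adj] (n k l a c : ℕ)
    (h : G.IsNeumaier n k l a c)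
    (hvt : ∀ u v : V, ∃ φ : G ≃g G, φ u = v) :
    (∀ u v : V, u ≠ v → G.dist u v ≤ 2) ∧ G ≠ ⊤ := by

  obtain ⟨hconn, hne, hreg, ha, C, hCcard, hclique, hnexus⟩ := h
  refine ⟨?_, hne⟩
  -- C is nonempty
  have hCne : C.Nonempty := by
    rcases C.eq_empty_or_nonempty with hC | hC
    · exfalso
      obtain ⟨v⟩ := hconn.nonempty
      have := hnexus v (by simp [hC])
      simp [hC] at this
      omega
    · exact hC
  obtain ⟨x, hx⟩ := hCne
  intro u v huv
  obtain ⟨φ, hφ⟩ := hvt x u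
  set D : Finset V := C.image (fun w => φ w) with hD
  have huD : u ∈ D := by
    exact Finset.mem_image.mpr ⟨x, hx, hφ⟩
  have hDclique : ∀ p ∈ D, ∀ q ∈ D, p ≠ q → G.Adj p q := by
    intro p hp q hq hpq
    obtain ⟨p', hp', rfl⟩ := Finset.mem_image.mp hp
    obtain ⟨q', hq', rfl⟩ := Finset.mem_image.mp hq
    have : G.Adj p' q' := hclique hp' hq' (fun hh => hpq (by rw [hh]))
    exact φ.map_adj_iff.mpr this
  by_cases hvD : v ∈ D
  · have : G.Adj u v := hDclique u huD v hvD huv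
    calc G.dist u v ≤ 1 := by
          simpa using SimpleGraph.dist_le (SimpleGraph.Walk.cons this SimpleGraph.Walk.nil)
      _ ≤ 2 := by omega
  · -- v has a neighbor in D
    have hsymm : φ.symm v ∉ C := by
      intro hc
      exact hvD (Finset.mem_image.mpr ⟨φ.symm v, hc, φ.apply_symm_apply v⟩)
    have hcard := hnexus (φ.symm v) hsymm
    have hne2 : (C.filter fun w => G.Adj (φ.symm v) w).Nonempty := by
      rw [← Finset.card_pos, hcard]; omega
    obtain ⟨w, hw⟩ := hne2
    rw [Finset.mem_filter] at hw
    have hadj : G.Adj v (φ w) := by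
      have := φ.map_adj_iff.mpr hw.2
      simpa using this
    have hwD : φ w ∈ D := Finset.mem_image.mpr ⟨w, hw.1, rfl⟩
    by_cases hwu : φ w = u
    · rw [hwu] at hadj
      calc G.dist u v ≤ 1 := by
            simpa using SimpleGraph.dist_le (SimpleGraph.Walk.cons hadj.symm SimpleGraph.Walk.nil)
        _ ≤ 2 := by omega
    · have h1 : G.Adj u (φ w) := hDclique u huD (φ w) hwD (fun hh => hwu hh.symm)
      have := SimpleGraph.dist_le (SimpleGraph.Walk.cons h1 (SimpleGraph.Walk.cons hadj.symm SimpleGraph.Walk.nil))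
      simpa using this
end

section
/- Let Γ be a Neumaier graph with parameters (n,k,λ;a,c). Then (k−c+1)(a−1) = (c−1)(λ−c+2). -/
open Finset SimpleGraph Matrix

/-- Lemma 3.4: in a Neumaier graph with parameters (n,k,l;a,c),
(k - c + 1)(a - 1) = (c - 1)(l - c + 2). -/
theorem neumaier_double_count_one {V : Type*} [Fintype V] [DecidableEq V]
    (G : SimpleGraph V) [DecidableRel G.Adj] (n k l a c : ℕ)
    (h : G.IsNeumaier n k l a c) :
    ((k : ℤ) - c + 1) * ((a : ℤ) - 1) = ((c : ℤ) - 1) * ((l : ℤ) - c + 2) := by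
  obtain ⟨hconn, -, ⟨-, hreg, hcommon⟩, ha, C, hC, hclique, hnexus⟩ := h
  -- C is nonempty
  have hCne : C.Nonempty := by
    rcases C.eq_empty_or_nonempty with hne | hne
    · exfalso
      obtain ⟨v⟩ := hconn.nonempty
      have := hnexus v (by simp [hne])
      simp [hne] at this
      omega
    · exact hne
  obtain ⟨x, hx⟩ := hCne
  classical
  set T : Finset V := univ.filter (fun y => y ∉ C ∧ G.Adj x y) with hTdef
  -- neighbors of x inside C
  have hfilt : C.filter (G.Adj x) = C.erase x := by
    ext u
    simp only [mem_filter, mem_erase]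
    constructor
    · rintro ⟨hu, hadj⟩; exact ⟨hadj.ne', hu⟩
    · rintro ⟨hne, hu⟩
      exact ⟨hu, hclique (Finset.mem_coe.2 hx) (Finset.mem_coe.2 hu) (Ne.symm hne)⟩
  have hCx : (C.erase x).card = c - 1 := by rw [Finset.card_erase_of_mem hx, hC]
  have hc1 : 1 ≤ c := by rw [← hC]; exact Finset.card_pos.2 ⟨x, hx⟩
  -- |T| = k - (c-1)
  have hTcard : (c - 1) + T.card = k := by
    have hk : (univ.filter (G.Adj x)).card = k := by
      rw [← SimpleGraph.neighborFinset_eq_filter]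
      exact hreg x
    have hsplit := Finset.card_filter_add_card_filter_not
      (s := univ.filter (G.Adj x)) (p := fun y => y ∈ C)
    have h1 : (univ.filter (G.Adj x)).filter (fun y => y ∈ C) = C.erase x := by
      rw [Finset.filter_filter, ← hfilt]
      ext u; simp [and_comm]
    have h2 : (univ.filter (G.Adj x)).filter (fun y => ¬ y ∈ C) = T := by
      rw [Finset.filter_filter, hTdef]
      ext u; simp [and_comm]
    rw [h1, h2, hk, hCx] at hsplit
    exact hsplit
  -- each y in T has a - 1 neighbors in C.erase x
  have hyT : ∀ y ∈ T, ((C.erase x).filter (fun z => G.Adj y z)).card + 1 = a := by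
    intro y hy
    rw [hTdef, mem_filter] at hy
    obtain ⟨-, hyC, hxy⟩ := hy
    have := hnexus y hyC
    rw [← this]
    have : (C.erase x).filter (fun z => G.Adj y z) = (C.filter (fun z => G.Adj y z)).erase x := by
      ext u; simp only [mem_filter, mem_erase]; tauto
    rw [this, Finset.card_erase_add_one]
    exact mem_filter.2 ⟨hx, hxy.symm⟩
  -- each z in C.erase x : common neighbors count
  have hzC : ∀ z ∈ C.erase x, (c - 2) + (T.filter (fun y => G.Adj y z)).card = l ∧ 2 ≤ c := by
    intro z hz
    rw [mem_erase] at hz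
    obtain ⟨hzx, hzc⟩ := hz
    have hadj : G.Adj x z := hclique (Finset.mem_coe.2 hx) (Finset.mem_coe.2 hzc) (Ne.symm hzx)
    have hl : (univ.filter (fun w => G.Adj x w ∧ G.Adj z w)).card = l := by
      rw [← hcommon x z hadj]
      rw [← Set.toFinset_card]
      congr 1
      ext w
      simp [SimpleGraph.mem_commonNeighbors]
    have hsub : {x, z} ⊆ C := by
      intro w hw
      rcases Finset.mem_insert.1 hw with h | h
      · rwa [h]
      · rw [Finset.mem_singleton.1 h]; exact hzc
    have hc2 : 2 ≤ c := by
      rw [← hC]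
      calc 2 = ({x, z} : Finset V).card := by rw [Finset.card_insert_of_notMem (by simp [hzx.symm]), Finset.card_singleton]
        _ ≤ C.card := Finset.card_le_card hsub
    refine ⟨?_, hc2⟩
    have hsplit := Finset.card_filter_add_card_filter_not
      (s := univ.filter (fun w => G.Adj x w ∧ G.Adj z w)) (p := fun w => w ∈ C)
    have h1 : (univ.filter (fun w => G.Adj x w ∧ G.Adj z w)).filter (fun w => w ∈ C)
        = C \ {x, z} := by
      ext u
      simp only [Finset.filter_filter, mem_filter, mem_univ, true_and, Finset.mem_sdiff,
        Finset.mem_insert, Finset.mem_singleton]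
      constructor
      · rintro ⟨⟨h1, h2⟩, h3⟩
        exact ⟨h3, by push_neg; exact ⟨h1.ne', h2.ne'⟩⟩
      · rintro ⟨huC, hne⟩
        push_neg at hne
        exact ⟨⟨hclique (Finset.mem_coe.2 hx) (Finset.mem_coe.2 huC) (Ne.symm hne.1),
          hclique (Finset.mem_coe.2 hzc) (Finset.mem_coe.2 huC) (Ne.symm hne.2)⟩, huC⟩
    have h2 : (univ.filter (fun w => G.Adj x w ∧ G.Adj z w)).filter (fun w => ¬ w ∈ C)
        = T.filter (fun y => G.Adj y z) := by
      ext u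
      simp only [Finset.filter_filter, mem_filter, mem_univ, true_and, hTdef]
      constructor
      · rintro ⟨⟨h1, h2⟩, h3⟩; exact ⟨⟨h3, h1⟩, h2.symm⟩
      · rintro ⟨⟨h3, h1⟩, h2⟩; exact ⟨⟨h1, h2.symm⟩, h3⟩
    have hcard12 : (C \ ({x, z} : Finset V)).card = c - 2 := by
      rw [Finset.card_sdiff_of_subset hsub, hC,
        Finset.card_insert_of_notMem (by simp [hzx.symm]), Finset.card_singleton]
    rw [h1, h2, hl, hcard12] at hsplit
    omega
  -- double counting
  have key : ∑ y ∈ T, ((C.erase x).filter (fun z => G.Adj y z)).card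
      = ∑ z ∈ C.erase x, (T.filter (fun y => G.Adj y z)).card := by
    simp_rw [Finset.card_filter]
    exact Finset.sum_comm
  -- cast to ℤ
  have keyZ : (T.card : ℤ) * ((a : ℤ) - 1) = ((c : ℤ) - 1) * ((l : ℤ) - c + 2) := by
    have h1 : (∑ y ∈ T, (((C.erase x).filter (fun z => G.Adj y z)).card : ℤ))
        = ∑ y ∈ T, ((a : ℤ) - 1) := by
      apply Finset.sum_congr rfl
      intro y hy
      have := hyT y hy
      push_cast [← this]
      ring
    have h2 : (∑ z ∈ C.erase x, ((T.filter (fun y => G.Adj y z)).card : ℤ))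
        = ∑ z ∈ C.erase x, ((l : ℤ) - c + 2) := by
      apply Finset.sum_congr rfl
      intro z hz
      obtain ⟨heq, hc2⟩ := hzC z hz
      have : ((c : ℤ) - 2) + ((T.filter (fun y => G.Adj y z)).card : ℤ) = l := by
        push_cast [← heq]
        omega
      linarith
    have hcast : (∑ y ∈ T, (((C.erase x).filter (fun z => G.Adj y z)).card : ℤ))
        = ∑ z ∈ C.erase x, ((T.filter (fun y => G.Adj y z)).card : ℤ) := by
      exact_mod_cast congrArg (Nat.cast : ℕ → ℤ) key
    rw [h1, h2] at hcast
    rw [Finset.sum_const, Finset.sum_const, hCx, nsmul_eq_mul, nsmul_eq_mul,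
      Nat.cast_sub hc1] at hcast
    simpa using hcast
  have hT : (T.card : ℤ) = (k : ℤ) - c + 1 := by omega
  rw [← hT]
  exact keyZ
end

section
/- Let Γ be a Neumaier graph with parameters (n,k,λ;a,c) that is moreover strongly regular with parameters (n,k,λ,μ). Then a divides μ, and the set of eigenvalues of the real adjacency matrix of Γ is exactly {k, c−a−1, −μ/a}; in particular −μ/a is an integer. -/
open Finset SimpleGraph Matrix

/-!
Write `A` for the adjacency matrix, `χ` for the indicator vector of the regular clique `C` and
`ρ = c - a - 1`. Counting neighbours in `C` gives `A χ = ρ χ + a 𝟙`, so the span of `χ` and `𝟙`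
is `A`-invariant and `(ρ - k) χ + a 𝟙` is a `ρ`-eigenvector. Evaluating the strongly regular
identity `A² = (λ - μ) A + (k - μ) I + μ J` on `χ` at a vertex inside and at a vertex outside `C`
shows that `ρ` is a root of `x² - (λ - μ) x - (k - μ)` and that `a (ρ + k) = (λ - μ) a + μ c`.
Since `c > a` (otherwise a vertex of `C` would be universal and `Γ` complete), these force
`a (ρ - λ + μ) = μ`: hence `a ∣ μ` and the other root is `-μ/a`. Now `(A - k)(A - ρ)(A + μ/a)`
vanishes, which confines the spectrum to `{k, ρ, -μ/a}`, and `-μ/a` is attained because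
`(A - k)(A - ρ)` has diagonal entries `k (ρ + 1) ≠ 0`.
-/

namespace Matrix

variable {n K : Type*} [Fintype n] [DecidableEq n] [Field K]

theorem sub_smul_one_mulVec_of_mulVec_eq_smul {A : Matrix n n K} {v : n → K} {x : K}
    (hv : A *ᵥ v = x • v) (y : K) : (A - y • 1) *ᵥ v = (x - y) • v := by
  rw [sub_mulVec, smul_mulVec, one_mulVec, hv, sub_smul]

theorem eq_or_eq_or_eq_of_mulVec_eq_smul {A : Matrix n n K} {a b c x : K} {v : n → K}
    (hA : (A - a • 1) * (A - b • 1) * (A - c • 1) = 0) (hv : v ≠ 0) (hAv : A *ᵥ v = x • v) :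
    x = a ∨ x = b ∨ x = c := by
  have h := congrArg (· *ᵥ v) hA
  simp only [← mulVec_mulVec, sub_smul_one_mulVec_of_mulVec_eq_smul hAv, mulVec_smul,
    smul_smul, zero_mulVec, smul_eq_zero, hv, or_false, mul_eq_zero, sub_eq_zero] at h
  tauto

theorem exists_mulVec_eq_smul_of_mul_sub_smul_one_eq_zero {M A : Matrix n n K} {x : K}
    (h : M * (A - x • 1) = 0) (hM : M ≠ 0) : ∃ v ≠ 0, A *ᵥ v = x • v := by
  obtain ⟨v, hv, hAv⟩ : ∃ v ≠ 0, (A - x • 1) *ᵥ v = 0 := by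
    rw [exists_mulVec_eq_zero_iff]
    by_contra hdet
    exact hM ((isUnit_iff_isUnit_det _ |>.mpr (isUnit_iff_ne_zero.mpr hdet)).mul_left_eq_zero.mp h)
  refine ⟨v, hv, ?_⟩
  rwa [sub_mulVec, smul_mulVec, one_mulVec, sub_eq_zero] at hAv

end Matrix

namespace SimpleGraph

variable {V : Type*} [Fintype V] {G : SimpleGraph V} [DecidableRel G.Adj]
  {R : Type*} [CommRing R] {n k l μ a : ℕ}

theorem IsRegularOfDegree.eq_top_of_isUniversal (hG : G.IsRegularOfDegree k) {u : V}
    (hu : G.IsUniversal u) : G = ⊤ := by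
  ext x y
  have hx : G.IsUniversal x := by
    rwa [← degree_eq_card_sub_one, hG x, ← hG u, degree_eq_card_sub_one]
  exact ⟨G.ne_of_adj, fun hxy => hx hxy⟩

theorem IsRegularOfDegree.adjMatrix_mulVec_one (hG : G.IsRegularOfDegree k) :
    G.adjMatrix R *ᵥ 1 = (k : R) • 1 := by
  ext v
  simp [hG v]

theorem IsRegularOfDegree.adjMatrix_mul_of_one (hG : G.IsRegularOfDegree k) :
    G.adjMatrix R * of 1 = (k : R) • of 1 := by
  ext i j
  simp [mul_apply, ← neighborFinset_eq_filter, hG i]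

variable [DecidableEq V]

theorem IsRegularOfDegree.adjMatrix_sub_mul_adjMatrix_sub_apply_self
    (hG : G.IsRegularOfDegree k) (r : R) (u : V) :
    ((G.adjMatrix R - (k : R) • 1) * (G.adjMatrix R - r • 1)) u u = k * (r + 1) := by
  simp only [sub_mul, mul_sub, Matrix.mul_smul, Matrix.smul_mul, mul_one, one_mul,
    Matrix.sub_apply, Matrix.smul_apply, adjMatrix_mul_self_apply_self, hG u, adjMatrix_apply,
    G.irrefl, if_false, one_apply_eq, smul_eq_mul]
  ring

theorem IsSRGWith.adjMatrix_mul_self (h : G.IsSRGWith n k l μ) :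
    G.adjMatrix R * G.adjMatrix R
      = ((l : R) - μ) • G.adjMatrix R + ((k : R) - μ) • 1 + (μ : R) • of 1 := by
  classical
  have hJ := G.one_add_adjMatrix_add_compl_adjMatrix_eq_of_one (α := R)
  rw [compl_adjMatrix_eq_adjMatrix_compl] at hJ
  rw [← sq, h.matrix_eq, ← hJ]
  simp only [← Nat.cast_smul_eq_nsmul R]
  module

theorem IsSRGWith.adjMatrix_sub_smul_mul_adjMatrix_sub_smul (h : G.IsSRGWith n k l μ)
    {r s : R} (hsum : r + s = l - μ) (hprod : r * s = μ - k) :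
    (G.adjMatrix R - r • 1) * (G.adjMatrix R - s • 1) = (μ : R) • of 1 := by
  have hA := h.adjMatrix_mul_self (R := R)
  simp only [sub_mul, mul_sub, Matrix.smul_mul, Matrix.mul_smul, one_mul, mul_one, hA]
  linear_combination (norm := module) (-hsum) • G.adjMatrix R + hprod • (1 : Matrix V V R)

theorem IsSRGWith.adjMatrix_cubic_eq_zero (h : G.IsSRGWith n k l μ)
    {r s : R} (hsum : r + s = l - μ) (hprod : r * s = μ - k) :
    (G.adjMatrix R - (k : R) • 1) * (G.adjMatrix R - r • 1) * (G.adjMatrix R - s • 1) = 0 := by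
  rw [mul_assoc, h.adjMatrix_sub_smul_mul_adjMatrix_sub_smul hsum hprod, Matrix.mul_smul, sub_mul,
    h.regular.adjMatrix_mul_of_one, Matrix.smul_mul, one_mul, sub_self, smul_zero]

namespace IsRegularCliqueWithNexus

variable {C : Finset V} {u v : V}

theorem exists_notMem (hC : G.IsRegularCliqueWithNexus C a) (hG : G ≠ ⊤) : ∃ v, v ∉ C := by
  by_contra! hall
  have hCuniv : (C : Set V) = .univ := Set.eq_univ_of_forall (by simpa using hall)
  exact hG (isClique_univ.mp (hCuniv ▸ hC.1))

theorem exists_mem_adj (hC : G.IsRegularCliqueWithNexus C a) (ha : 0 < a) (hv : v ∉ C) :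
    ∃ u ∈ C, G.Adj v u := by
  obtain ⟨u, hu⟩ := Finset.card_pos.mp (hC.2 v hv ▸ ha)
  exact ⟨u, (mem_filter.mp hu).1, (mem_filter.mp hu).2⟩

theorem isUniversal_of_card_le (hC : G.IsRegularCliqueWithNexus C a) (hCa : #C ≤ a)
    (hu : u ∈ C) : G.IsUniversal u := by
  intro w huw
  by_cases hw : w ∈ C
  · exact hC.1 hu hw huw
  · have hfull : C.filter (G.Adj w) = C :=
      eq_of_subset_of_card_le (filter_subset _ _) (hC.2 w hw ▸ hCa)
    exact (mem_filter.mp (hfull ▸ hu)).2.symm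

theorem lt_card (hC : G.IsRegularCliqueWithNexus C a) (hG : G.IsRegularOfDegree k)
    (hne : G ≠ ⊤) (ha : 0 < a) : a < #C := by
  by_contra! hCa
  obtain ⟨v, hv⟩ := hC.exists_notMem hne
  obtain ⟨u, hu, -⟩ := hC.exists_mem_adj ha hv
  exact hne (hG.eq_top_of_isUniversal (hC.isUniversal_of_card_le hCa hu))

theorem adjMatrix_mulVec_indicator (hC : G.IsRegularCliqueWithNexus C a) :
    G.adjMatrix R *ᵥ (fun v => if v ∈ C then 1 else 0)
      = ((#C : R) - a - 1) • (fun v => if v ∈ C then 1 else 0) + (a : R) • 1 := by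
  ext v
  rw [adjMatrix_mulVec_apply, sum_boole]
  by_cases hv : v ∈ C
  · have hN : (G.neighborFinset v).filter (· ∈ C) = C.erase v := by
      ext w
      simp only [mem_filter, mem_neighborFinset, mem_erase]
      exact ⟨fun ⟨hvw, hw⟩ => ⟨hvw.ne', hw⟩, fun ⟨hwv, hw⟩ => ⟨hC.1 hv hw hwv.symm, hw⟩⟩
    have hcard := congrArg (Nat.cast (R := R)) (card_erase_add_one hv)
    push_cast at hcard
    rw [hN, ← hcard]
    simp only [hv, if_true, Pi.add_apply, Pi.smul_apply, Pi.one_apply, smul_eq_mul]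
    ring
  · have hN : (G.neighborFinset v).filter (· ∈ C) = C.filter (G.Adj v) := by
      ext w
      simp [and_comm]
    simp [hN, hv, hC.2 v hv]

theorem exists_mulVec_eq_smul (hC : G.IsRegularCliqueWithNexus C a) (hG : G.IsRegularOfDegree k)
    (ha : (a : R) ≠ 0) (hv : v ∉ C) :
    ∃ w ≠ 0, G.adjMatrix R *ᵥ w = ((#C : R) - a - 1) • w := by
  refine ⟨((#C : R) - a - 1 - k) • (fun v => if v ∈ C then 1 else 0) + (a : R) • 1,
    fun h0 => ha ?_, ?_⟩
  · simpa [hv] using congrFun h0 v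
  · rw [mulVec_add, mulVec_smul, mulVec_smul, hC.adjMatrix_mulVec_indicator,
      hG.adjMatrix_mulVec_one]
    module

theorem param_relations_of_isSRGWith (hC : G.IsRegularCliqueWithNexus C a)
    (h : G.IsSRGWith n k l μ) (hu : u ∈ C) (hv : v ∉ C) :
    ((#C : R) - a - 1) * (#C - a - 1) = (l - μ) * (#C - a - 1) + (k - μ) ∧
      (a : R) * (#C - a - 1 + k) = (l - μ) * a + μ * #C := by
  have hA := congrArg (· *ᵥ fun v => if v ∈ C then (1 : R) else 0) (h.adjMatrix_mul_self (R := R))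
  have hJ : (of 1 : Matrix V V R) *ᵥ (fun v => if v ∈ C then (1 : R) else 0) = (#C : R) • 1 := by
    ext; simp [mulVec, dotProduct]
  simp only [← mulVec_mulVec, add_mulVec, smul_mulVec, hC.adjMatrix_mulVec_indicator, mulVec_add,
    mulVec_smul, h.regular.adjMatrix_mulVec_one, one_mulVec, hJ] at hA
  have hAu := congrFun hA u
  have hAv := congrFun hA v
  simp only [hu, hv, if_true, if_false, Pi.add_apply, Pi.smul_apply, Pi.one_apply,
    smul_eq_mul] at hAu hAv
  constructor
  · linear_combination hAu - hAv
  · linear_combination hAv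

theorem nexus_mul_eq_of_isSRGWith (hC : G.IsRegularCliqueWithNexus C a)
    (h : G.IsSRGWith n k l μ) (hne : G ≠ ⊤) (ha : 0 < a) : (a : ℤ) * (#C - a - 1 - l + μ) = μ := by
  obtain ⟨v, hv⟩ := hC.exists_notMem hne
  obtain ⟨u, hu, -⟩ := hC.exists_mem_adj ha hv
  obtain ⟨hquad, hnexus⟩ := hC.param_relations_of_isSRGWith (R := ℤ) h hu hv
  have hlt : (a : ℤ) < #C := by exact_mod_cast hC.lt_card h.regular hne ha
  have hfactor : ((#C : ℤ) - a) * (a * (#C - a - 1 - l + μ) - μ) = 0 := by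
    linear_combination (a : ℤ) * hquad + hnexus
  linear_combination (mul_eq_zero.mp hfactor).resolve_left (by omega)

theorem nexus_dvd_of_isSRGWith (hC : G.IsRegularCliqueWithNexus C a) (h : G.IsSRGWith n k l μ)
    (hne : G ≠ ⊤) (ha : 0 < a) : a ∣ μ :=
  Int.natCast_dvd_natCast.mp ⟨_, (hC.nexus_mul_eq_of_isSRGWith h hne ha).symm⟩

theorem eigenvalue_add_and_mul_of_isSRGWith (hC : G.IsRegularCliqueWithNexus C a)
    (h : G.IsSRGWith n k l μ) (hne : G ≠ ⊤) (ha : 0 < a) :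
    ((#C : ℝ) - a - 1) + -(μ / a : ℝ) = l - μ ∧ ((#C : ℝ) - a - 1) * -(μ / a : ℝ) = μ - k := by
  obtain ⟨v, hv⟩ := hC.exists_notMem hne
  obtain ⟨u, hu, -⟩ := hC.exists_mem_adj ha hv
  have hquad := (hC.param_relations_of_isSRGWith (R := ℝ) h hu hv).1
  have hs : -(μ / a : ℝ) = l - μ - (#C - a - 1) := by
    have key : (a : ℝ) * (#C - a - 1 - l + μ) = μ := by
      exact_mod_cast hC.nexus_mul_eq_of_isSRGWith h hne ha
    have ha' : (a : ℝ) ≠ 0 := by positivity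
    field_simp
    linear_combination key
  rw [hs]
  constructor
  · ring
  · linear_combination -hquad

end IsRegularCliqueWithNexus

end SimpleGraph

/-- Proposition 3.6: a strongly regular Neumaier graph with parameters (n,k,l,μ;a,c) has
exactly the three eigenvalues k, c - a - 1 and -μ/a; in particular a divides μ, so that
-μ/a is an integer. -/
theorem srg_neumaier_eigenvalues {V : Type*} [Fintype V] [DecidableEq V]
    (G : SimpleGraph V) [DecidableRel G.Adj] (n k l μ a c : ℕ)
    (h : G.IsNeumaier n k l a c) (hsrg : G.IsSRGWith n k l μ) :
    a ∣ μ ∧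
    ∀ x : ℝ, (∃ v : V → ℝ, v ≠ 0 ∧ G.adjMatrix ℝ *ᵥ v = x • v) ↔
      (x = (k : ℝ) ∨ x = (c : ℝ) - a - 1 ∨ x = -((μ : ℝ) / a)) := by
  obtain ⟨-, hne, -, ha, C, rfl, hC⟩ := h
  obtain ⟨v, hv⟩ := hC.exists_notMem hne
  obtain ⟨u, hu, hvu⟩ := hC.exists_mem_adj ha hv
  obtain ⟨hsum, hprod⟩ := hC.eigenvalue_add_and_mul_of_isSRGWith hsrg hne ha
  have hcubic := hsrg.adjMatrix_cubic_eq_zero hsum hprod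
  refine ⟨hC.nexus_dvd_of_isSRGWith hsrg hne ha, fun x => ⟨fun ⟨w, hw, hAw⟩ =>
    eq_or_eq_or_eq_of_mulVec_eq_smul hcubic hw hAw, ?_⟩⟩
  rintro (rfl | rfl | rfl)
  · exact ⟨1, fun h1 => one_ne_zero (congrFun h1 v), hsrg.regular.adjMatrix_mulVec_one⟩
  · exact hC.exists_mulVec_eq_smul hsrg.regular (by positivity) hv
  · refine exists_mulVec_eq_smul_of_mul_sub_smul_one_eq_zero hcubic fun h0 => ?_
    have huu := congrFun (congrFun h0 u) u
    rw [hsrg.regular.adjMatrix_sub_mul_adjMatrix_sub_apply_self, Matrix.zero_apply] at huu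
    have hk : 0 < k := hsrg.regular v ▸ G.degree_pos_iff_exists_adj v |>.mpr ⟨u, hvu⟩
    have hlt : (a : ℝ) < #C := by exact_mod_cast hC.lt_card hsrg.regular hne ha
    exact mul_ne_zero (by positivity) (by linarith) huu
end

section
/- Let Γ be a Neumaier graph with parameters (n,k,λ;a,c) that is moreover strongly regular with parameters (n,k,λ,μ). Then (k−c+1)(k−λ−1) = (n−k−1)(μ−a). -/
/-! Fix a vertex `x` of the regular clique `C` and double count the edges between
`A = N(x) ∖ C` and the set `B` of vertices other than `x` not adjacent to `x`. A vertex of `A`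
is adjacent to `x` and to `λ` common neighbours, so it has `k - λ - 1` neighbours in `B`. A vertex
`w ∈ B` has `μ` common neighbours with `x`, of which exactly `a` lie in `C` (every vertex of
`C ∖ {x}` is adjacent to `x`), so it has `μ - a` neighbours in `A`. Finally
`|A| = k - c + 1` and `|B| = n - k - 1`. -/

open Finset SimpleGraph Matrix

theorem Finset.card_nsmul_eq_card_nsmul {α β R : Type*} [Semiring R] [PartialOrder R]
    [IsOrderedRing R] (r : α → β → Prop) [∀ a b, Decidable (r a b)] {s : Finset α}
    {t : Finset β} {m n : R} (hm : ∀ a ∈ s, (#(t.bipartiteAbove r a) : R) = m)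
    (hn : ∀ b ∈ t, (#(s.bipartiteBelow r b) : R) = n) : #s • m = #t • n :=
  (card_nsmul_le_card_nsmul r (fun a ha ↦ (hm a ha).ge) fun b hb ↦ (hn b hb).le).antisymm <|
    card_nsmul_le_card_nsmul' r (fun b hb ↦ (hn b hb).ge) fun a ha ↦ (hm a ha).le

namespace SimpleGraph

variable {V : Type*} [Fintype V] [DecidableEq V] {G : SimpleGraph V} [DecidableRel G.Adj]

theorem card_commonNeighbors_eq_card_inter (x y : V) :
    Fintype.card (G.commonNeighbors x y) = #(G.neighborFinset x ∩ G.neighborFinset y) := by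
  rw [← Set.toFinset_card]
  congr 1
  ext z
  simp [mem_commonNeighbors]

theorem Adj.degree_eq_card_filter_adj_compl_neighborFinset_add {x y : V} (hxy : G.Adj x y) :
    G.degree y =
      #{w ∈ Gᶜ.neighborFinset x | G.Adj y w} + Fintype.card (G.commonNeighbors x y) + 1 := by
  have hfar : {w ∈ Gᶜ.neighborFinset x | G.Adj y w} =
      G.neighborFinset y \ insert x (G.neighborFinset x) := by
    ext w
    simp only [mem_filter, mem_neighborFinset, compl_adj, mem_sdiff, mem_insert]
    tauto
  have hnear : G.neighborFinset y ∩ insert x (G.neighborFinset x) =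
      insert x (G.neighborFinset x ∩ G.neighborFinset y) := by
    ext w
    simp only [mem_inter, mem_neighborFinset, mem_insert]
    grind [hxy.symm]
  have hx : x ∉ G.neighborFinset x ∩ G.neighborFinset y := by simp
  rw [hfar, card_commonNeighbors_eq_card_inter, add_assoc, ← card_insert_of_notMem hx, ← hnear,
    card_sdiff_add_card_inter, card_neighborFinset_eq_degree]

theorem degree_compl_add_degree_add_one (v : V) :
    Gᶜ.degree v + G.degree v + 1 = Fintype.card V := by
  have := G.degree_lt_card_verts v
  rw [degree_compl]
  omega

namespace IsClique

variable {C : Finset V} {x : V}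

theorem card_neighborFinset_sdiff_add_card (hC : G.IsClique (C : Set V)) (hx : x ∈ C) :
    #(G.neighborFinset x \ C) + #C = G.degree x + 1 := by
  have hinter : G.neighborFinset x ∩ C = C.erase x := by
    ext z
    simp only [mem_inter, mem_neighborFinset, mem_erase]
    exact ⟨fun ⟨hxz, hz⟩ ↦ ⟨hxz.ne.symm, hz⟩, fun ⟨hzx, hz⟩ ↦ ⟨hC hx hz hzx.symm, hz⟩⟩
  rw [← card_erase_add_one hx, ← hinter, ← add_assoc, card_sdiff_add_card_inter,
    card_neighborFinset_eq_degree]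

theorem card_commonNeighbors_eq_of_compl_adj (hC : G.IsClique (C : Set V)) (hx : x ∈ C) {w : V}
    (hw : Gᶜ.Adj x w) :
    Fintype.card (G.commonNeighbors x w) =
      #{y ∈ G.neighborFinset x \ C | G.Adj y w} + #{u ∈ C | G.Adj w u} := by
  have hout : (G.neighborFinset x ∩ G.neighborFinset w) \ C =
      {y ∈ G.neighborFinset x \ C | G.Adj y w} := by
    ext y
    simp only [mem_sdiff, mem_inter, mem_filter, mem_neighborFinset, G.adj_comm w y]
    tauto
  have hin : G.neighborFinset x ∩ G.neighborFinset w ∩ C = {u ∈ C | G.Adj w u} := by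
    ext u
    simp only [mem_inter, mem_filter, mem_neighborFinset]
    refine ⟨fun ⟨⟨_, hwu⟩, hu⟩ ↦ ⟨hu, hwu⟩, fun ⟨hu, hwu⟩ ↦ ⟨⟨hC hx hu ?_, hwu⟩, hu⟩⟩
    rintro rfl
    exact hw.2 hwu.symm
  rw [card_commonNeighbors_eq_card_inter, ← hout, ← hin, card_sdiff_add_card_inter]

end IsClique

theorem IsRegularCliqueWithNexus.nonempty [Nonempty V] {C : Finset V} {a : ℕ}
    (hC : G.IsRegularCliqueWithNexus C a) (ha : a ≠ 0) : C.Nonempty := by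
  rw [nonempty_iff_ne_empty]
  rintro rfl
  obtain ⟨v⟩ := ‹Nonempty V›
  exact ha ((hC.2 v (notMem_empty v)).symm.trans (by simp))

end SimpleGraph

/-- Proposition 3.7, equation (1): in a strongly regular Neumaier graph with parameters
(n,k,l,μ;a,c), (k - c + 1)(k - l - 1) = (n - k - 1)(μ - a). -/
theorem srg_neumaier_equation_one {V : Type*} [Fintype V] [DecidableEq V]
    (G : SimpleGraph V) [DecidableRel G.Adj] (n k l μ a c : ℕ)
    (h : G.IsNeumaier n k l a c) (hsrg : G.IsSRGWith n k l μ) :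
    ((k : ℤ) - c + 1) * ((k : ℤ) - l - 1) = ((n : ℤ) - k - 1) * ((μ : ℤ) - a) := by
  obtain ⟨hconn, -, -, ha, C, rfl, hC⟩ := h
  have := hconn.nonempty
  obtain ⟨x, hx⟩ := hC.nonempty (by omega)
  have hAbove : ∀ y ∈ G.neighborFinset x \ C,
      (#((Gᶜ.neighborFinset x).bipartiteAbove G.Adj y) : ℤ) = k - l - 1 := by
    intro y hy
    have hxy : G.Adj x y := (G.mem_neighborFinset x y).1 (mem_sdiff.1 hy).1
    have := hxy.degree_eq_card_filter_adj_compl_neighborFinset_add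
    rw [hsrg.regular y, hsrg.of_adj x y hxy] at this
    simp only [bipartiteAbove]
    omega
  have hBelow : ∀ w ∈ Gᶜ.neighborFinset x,
      (#((G.neighborFinset x \ C).bipartiteBelow G.Adj w) : ℤ) = μ - a := by
    intro w hw
    have hxw : Gᶜ.Adj x w := (Gᶜ.mem_neighborFinset x w).1 hw
    have := hC.1.card_commonNeighbors_eq_of_compl_adj hx hxw
    rw [hsrg.of_not_adj hxw.1 hxw.2, hC.2 w fun hwC ↦ hxw.2 (hC.1 hx hwC hxw.1)] at this
    simp only [bipartiteBelow]
    omega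
  have hA := hC.1.card_neighborFinset_sdiff_add_card hx
  have hB := G.degree_compl_add_degree_add_one x
  rw [hsrg.regular x] at hA hB
  rw [hsrg.card] at hB
  have hdc := card_nsmul_eq_card_nsmul G.Adj hAbove hBelow
  rw [card_neighborFinset_eq_degree, nsmul_eq_mul, nsmul_eq_mul] at hdc
  have hAcard : (#(G.neighborFinset x \ C) : ℤ) = k - #C + 1 := by omega
  have hBcard : (Gᶜ.degree x : ℤ) = n - k - 1 := by omega
  rwa [hAcard, hBcard] at hdc
end

section
/- Let Γ be a Neumaier graph with parameters (n,k,λ;a,c). If c = k, then n = 4, k = 2, and Γ is isomorphic to the cycle graph C₄ on 4 vertices. -/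
open Finset SimpleGraph Matrix

private lemma aux_inj {V : Type*} (u w y x : V) (h1 : u ≠ w) (h2 : u ≠ x) (h3 : u ≠ y)
    (h4 : w ≠ x) (h5 : w ≠ y) (h6 : x ≠ y) :
    Function.Injective ![u, w, y, x] := by
  intro i j hij
  fin_cases i <;> fin_cases j <;>
    simp only [Matrix.cons_val_zero, Matrix.cons_val_one, Matrix.head_cons,
      Matrix.cons_val_two, Matrix.tail_cons, Matrix.cons_val_three] at hij ⊢ <;>
    first
      | rfl
      | exact absurd hij h1 | exact absurd hij h2 | exact absurd hij h3
      | exact absurd hij h4 | exact absurd hij h5 | exact absurd hij h6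
      | exact absurd hij.symm h1 | exact absurd hij.symm h2 | exact absurd hij.symm h3
      | exact absurd hij.symm h4 | exact absurd hij.symm h5 | exact absurd hij.symm h6

private lemma aux_adj {V : Type*} (G : SimpleGraph V) (u w y x : V)
    (huw : G.Adj u w) (hux : G.Adj u x) (hwy : G.Adj w y) (hxy : G.Adj x y)
    (hnuy : ¬ G.Adj u y) (hnwx : ¬ G.Adj w x) :
    ∀ i j : Fin 4, G.Adj (![u, w, y, x] i) (![u, w, y, x] j) ↔ (cycleGraph 4).Adj i j := by
  intro i j
  fin_cases i <;> fin_cases j <;>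
    simp only [Matrix.cons_val_zero, Matrix.cons_val_one, Matrix.head_cons,
      Matrix.cons_val_two, Matrix.tail_cons, Matrix.cons_val_three] <;>
    first
      | exact iff_of_false (G.irrefl) (by decide)
      | exact iff_of_true huw (by decide)
      | exact iff_of_true huw.symm (by decide)
      | exact iff_of_true hux (by decide)
      | exact iff_of_true hux.symm (by decide)
      | exact iff_of_true hwy (by decide)
      | exact iff_of_true hwy.symm (by decide)
      | exact iff_of_true hxy (by decide)
      | exact iff_of_true hxy.symm (by decide)
      | exact iff_of_false hnuy (by decide)
      | exact iff_of_false (fun hh => hnuy hh.symm) (by decide)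
      | exact iff_of_false hnwx (by decide)
      | exact iff_of_false (fun hh => hnwx hh.symm) (by decide)

/-- Proposition 3.10: a Neumaier graph with parameters (n,k,l;a,c) satisfying c = k is
the cycle graph C₄ (so n = 4 and k = 2). -/
theorem neumaier_c_eq_k {V : Type*} [Fintype V] [DecidableEq V]
    (G : SimpleGraph V) [DecidableRel G.Adj] (n k l a c : ℕ)
    (h : G.IsNeumaier n k l a c) (hck : c = k) :
    n = 4 ∧ k = 2 ∧ Nonempty (G ≃g cycleGraph 4) := by
  obtain ⟨hconn, hne, ⟨hn, hreg, hlam⟩, ha, C, hC, hclique, hnexus⟩ := h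
  rw [hck] at hC
  clear hck
  -- G is not top : there exist distinct non-adjacent vertices
  have hnontop : ∃ p q : V, p ≠ q ∧ ¬ G.Adj p q := by
    by_contra hcon
    push_neg at hcon
    exact hne (by ext p q; exact ⟨fun h => h.ne, fun h => hcon p q h⟩)
  -- k ≥ 1
  have hk1 : 1 ≤ k := by
    obtain ⟨p, q, hpq, -⟩ := hnontop
    obtain ⟨w⟩ := hconn.preconnected p q
    cases w with
    | nil => exact absurd rfl hpq
    | cons hadj _ =>
      have := G.degree_pos_iff_exists_adj p |>.2 ⟨_, hadj⟩
      rw [hreg p] at this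
      omega
  -- neighbors of u ∈ C inside C
  have hinC : ∀ u ∈ C, G.neighborFinset u ∩ C = C.erase u := by
    intro u hu
    ext z
    simp only [Finset.mem_inter, mem_neighborFinset, Finset.mem_erase]
    constructor
    · rintro ⟨hadj, hz⟩
      exact ⟨hadj.ne', hz⟩
    · rintro ⟨hzu, hz⟩
      exact ⟨hclique hu hz (Ne.symm hzu), hz⟩
  -- each u ∈ C has exactly one neighbor outside C
  have hout : ∀ u ∈ C, (G.neighborFinset u \ C).card = 1 := by
    intro u hu
    have h1 := Finset.card_inter_add_card_sdiff (G.neighborFinset u) C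
    rw [hinC u hu, Finset.card_erase_of_mem hu, hC, G.card_neighborFinset_eq_degree, hreg u] at h1
    omega
  -- there is a vertex outside C
  have hCne : ∃ v, v ∉ C := by
    by_contra hcon
    push_neg at hcon
    refine hne ?_
    ext p q
    exact ⟨fun h => h.ne, fun h => hclique (hcon p) (hcon q) h⟩
  obtain ⟨v₀, hv₀⟩ := hCne
  -- a ≤ k
  have hak : a ≤ k := by
    have hsub : (C.filter fun u => G.Adj v₀ u) ⊆ G.neighborFinset v₀ := by
      intro z hz
      simp only [Finset.mem_filter] at hz
      simpa [mem_neighborFinset] using hz.2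
    have := Finset.card_le_card hsub
    rw [hnexus v₀ hv₀, G.card_neighborFinset_eq_degree, hreg v₀] at this
    exact this
  -- l = a - 1
  have hl : l = a - 1 := by
    have hfne : (C.filter fun u => G.Adj v₀ u).Nonempty := by
      rw [← Finset.card_pos, hnexus v₀ hv₀]; omega
    obtain ⟨u, hu⟩ := hfne
    simp only [Finset.mem_filter] at hu
    obtain ⟨huC, hadj⟩ := hu
    have hkey : G.commonNeighbors u v₀ = ↑((C.filter fun t => G.Adj v₀ t).erase u) := by
      ext z
      simp only [mem_commonNeighbors, Finset.coe_erase, Set.mem_diff, Finset.mem_coe,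
        Finset.mem_filter, Set.mem_singleton_iff]
      constructor
      · rintro ⟨h1, h2⟩
        have hzC : z ∈ C := by
          by_contra hzC
          have hz' : z ∈ G.neighborFinset u \ C := by
            simp [mem_neighborFinset, h1, hzC]
          have hv' : v₀ ∈ G.neighborFinset u \ C := by
            simp [mem_neighborFinset, hadj.symm, hv₀]
          obtain ⟨x, hx⟩ := Finset.card_eq_one.1 (hout u huC)
          rw [hx, Finset.mem_singleton] at hz' hv'
          rw [hz'.trans hv'.symm] at h2
          exact G.irrefl h2
        exact ⟨⟨hzC, h2⟩, h1.ne'⟩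
      · rintro ⟨⟨hzC, hzv⟩, hzu⟩
        exact ⟨hclique huC hzC (Ne.symm hzu), hzv⟩
    have := hlam u v₀ hadj.symm
    rw [← Set.toFinset_card, Set.toFinset_congr hkey, Finset.toFinset_coe,
      Finset.card_erase_of_mem (by simp [huC, hadj]), hnexus v₀ hv₀] at this
    omega
  -- a < k
  have haltk : a < k := by
    rcases lt_or_eq_of_le hak with h' | h'
    · exact h'
    -- a = k : contradiction, G would be complete on C ∪ {v₀}
    exfalso
    have hall : ∀ z, z ∉ C → ∀ u ∈ C, G.Adj z u := by
      intro z hz u hu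
      have hsub : (C.filter fun t => G.Adj z t) ⊆ C := Finset.filter_subset _ _
      have hcard : (C.filter fun t => G.Adj z t).card = C.card := by
        rw [hnexus z hz, hC, h']
      have : (C.filter fun t => G.Adj z t) = C := Finset.eq_of_subset_of_card_le hsub (le_of_eq hcard.symm)
      have := this ▸ hu
      simp only [Finset.mem_filter] at this
      exact this.2
    have huniv : ∀ z, z ∈ C ∨ z = v₀ := by
      intro z
      by_contra hcon
      push_neg at hcon
      obtain ⟨hz1, hz2⟩ := hcon
      obtain ⟨u, hu⟩ : C.Nonempty := by rw [← Finset.card_pos, hC]; omega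
      obtain ⟨x, hx⟩ := Finset.card_eq_one.1 (hout u hu)
      have hz' : z ∈ G.neighborFinset u \ C := by
        simp [mem_neighborFinset, (hall z hz1 u hu).symm, hz1]
      have hv' : v₀ ∈ G.neighborFinset u \ C := by
        simp [mem_neighborFinset, (hall v₀ hv₀ u hu).symm, hv₀]
      rw [hx, Finset.mem_singleton] at hz' hv'
      exact hz2 (hz'.trans hv'.symm)
    refine hne ?_
    ext p q
    refine ⟨fun h => h.ne, fun hpq => ?_⟩
    rcases huniv p with hp | hp <;> rcases huniv q with hq | hq
    · exact hclique hp hq hpq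
    · subst hq; exact ((hall q hv₀ p hp)).symm
    · subst hp; exact hall p hv₀ q hq
    · exact absurd (hp.trans hq.symm) hpq
  have hk2 : 2 ≤ k := by omega
  -- common neighbors of an edge inside C
  have hcommon : ∀ u ∈ C, ∀ w ∈ C, u ≠ w →
      G.neighborFinset u ∩ G.neighborFinset w = (C.erase u).erase w ∧ a = k - 1 := by
    intro u hu w hw huw
    have hsub : (C.erase u).erase w ⊆ G.neighborFinset u ∩ G.neighborFinset w := by
      intro z hz
      simp only [Finset.mem_erase] at hz
      obtain ⟨hzw, hzu, hzC⟩ := hz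
      simp only [Finset.mem_inter, mem_neighborFinset]
      exact ⟨hclique hu hzC (Ne.symm hzu), hclique hw hzC (Ne.symm hzw)⟩
    have hcards : (G.neighborFinset u ∩ G.neighborFinset w).card = l := by
      have := hlam u w (hclique hu hw huw)
      rw [← Set.toFinset_card, Set.toFinset_congr (show G.commonNeighbors u w
          = ↑(G.neighborFinset u ∩ G.neighborFinset w) by
        simp [commonNeighbors, Set.ext_iff, mem_neighborFinset]), Finset.toFinset_coe] at this
      exact this
    have hc2 : ((C.erase u).erase w).card = k - 2 := by
      rw [Finset.card_erase_of_mem (Finset.mem_erase.2 ⟨Ne.symm huw, hw⟩),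
        Finset.card_erase_of_mem hu, hC]
      omega
    have hle := Finset.card_le_card hsub
    rw [hcards, hc2] at hle
    have hak1 : a = k - 1 := by omega
    refine ⟨(Finset.eq_of_subset_of_card_le hsub ?_).symm, hak1⟩
    rw [hcards, hc2]; omega
  -- k < 3
  have hk3 : k < 3 := by
    by_contra hcon
    push_neg at hcon
    -- v₀ has a = k-1 ≥ 2 neighbors in C
    have h2 : 2 ≤ (C.filter fun t => G.Adj v₀ t).card := by
      obtain ⟨u, hu⟩ : C.Nonempty := by rw [← Finset.card_pos, hC]; omega
      obtain ⟨w, hw⟩ : (C.erase u).Nonempty := by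
        rw [← Finset.card_pos, Finset.card_erase_of_mem hu, hC]; omega
      have := (hcommon u hu w (Finset.mem_erase.1 hw).2 (Ne.symm (Finset.mem_erase.1 hw).1)).2
      rw [hnexus v₀ hv₀]; omega
    obtain ⟨u, hu, w, hw, huw⟩ := Finset.one_lt_card.1 h2
    simp only [Finset.mem_filter] at hu hw
    have hkey := (hcommon u hu.1 w hw.1 huw).1
    have : v₀ ∈ G.neighborFinset u ∩ G.neighborFinset w := by
      simp [mem_neighborFinset, hu.2.symm, hw.2.symm]
    rw [hkey] at this
    simp only [Finset.mem_erase] at this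
    exact hv₀ this.2.2
  have hkeq : k = 2 := by omega
  subst hkeq
  have haeq : a = 1 := by omega
  subst haeq
  have hleq : l = 0 := by omega
  -- C = {u, w}
  obtain ⟨u, w, huw, hCuw⟩ := Finset.card_eq_two.1 (by rw [hC] : C.card = 2)
  have huC : u ∈ C := by rw [hCuw]; simp
  have hwC : w ∈ C := by rw [hCuw]; simp
  have hcomuw : G.neighborFinset u ∩ G.neighborFinset w = ∅ := by
    have := (hcommon u huC w hwC huw).1
    rw [hCuw] at this
    rw [this]
    ext z; simp [huw]
  obtain ⟨x, hx⟩ := Finset.card_eq_one.1 (hout u huC)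
  obtain ⟨y, hy⟩ := Finset.card_eq_one.1 (hout w hwC)
  have hxmem : x ∈ G.neighborFinset u \ C := by rw [hx]; simp
  have hymem : y ∈ G.neighborFinset w \ C := by rw [hy]; simp
  simp only [Finset.mem_sdiff, mem_neighborFinset] at hxmem hymem
  obtain ⟨hux, hxC⟩ := hxmem
  obtain ⟨hwy, hyC⟩ := hymem
  have hxy : x ≠ y := by
    intro hh
    have : x ∈ G.neighborFinset u ∩ G.neighborFinset w := by
      simp [mem_neighborFinset, hux, hh ▸ hwy]
    rw [hcomuw] at this
    simp at this
  -- non-adjacency u y, w x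
  have hnuy : ¬ G.Adj u y := by
    intro hh
    have : y ∈ G.neighborFinset u \ C := by simp [mem_neighborFinset, hh, hyC]
    rw [hx, Finset.mem_singleton] at this
    exact hxy this.symm
  have hnwx : ¬ G.Adj w x := by
    intro hh
    have : x ∈ G.neighborFinset w \ C := by simp [mem_neighborFinset, hh, hxC]
    rw [hy, Finset.mem_singleton] at this
    exact hxy this
  -- every vertex is u, w, x or y
  have huniv : ∀ z : V, z = u ∨ z = w ∨ z = x ∨ z = y := by
    intro z
    by_cases hzC : z ∈ C
    · rw [hCuw] at hzC; simp at hzC; tauto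
    · have hfne : (C.filter fun t => G.Adj z t).Nonempty := by
        rw [← Finset.card_pos, hnexus z hzC]; omega
      obtain ⟨p, hp⟩ := hfne
      simp only [Finset.mem_filter] at hp
      obtain ⟨hpC, hpz⟩ := hp
      rw [hCuw] at hpC
      simp only [Finset.mem_insert, Finset.mem_singleton] at hpC
      rcases hpC with hp | hp
      · have hz' : z ∈ G.neighborFinset u \ C := by
          rw [← hp]; simp [mem_neighborFinset, hpz.symm, hzC]
        rw [hx, Finset.mem_singleton] at hz'
        tauto
      · have hz' : z ∈ G.neighborFinset w \ C := by
          rw [← hp]; simp [mem_neighborFinset, hpz.symm, hzC]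
        rw [hy, Finset.mem_singleton] at hz'
        tauto
  -- x adjacent to y
  have hxy_adj : G.Adj x y := by
    have hdx : (G.neighborFinset x).card = 2 := by
      rw [G.card_neighborFinset_eq_degree, hreg x]
    -- neighbors of x : u is one; the other is outside {u, w, x}
    have : ∃ z ∈ G.neighborFinset x, z ≠ u := by
      by_contra hcon
      push_neg at hcon
      have : G.neighborFinset x ⊆ {u} := fun z hz => Finset.mem_singleton.2 (hcon z hz)
      have := Finset.card_le_card this
      rw [hdx] at this
      simp at this
    obtain ⟨z, hz, hzu⟩ := this
    rw [mem_neighborFinset] at hz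
    rcases huniv z with h' | h' | h' | h'
    · exact absurd h' hzu
    · exact absurd (h' ▸ hz) (fun hh => hnwx hh.symm)
    · exact absurd (h' ▸ hz) G.irrefl
    · exact h' ▸ hz
  -- distinctness facts
  have hux_ne : u ≠ x := fun hh => hxC (hh ▸ huC)
  have huy_ne : u ≠ y := fun hh => hyC (hh ▸ huC)
  have hwx_ne : w ≠ x := fun hh => hxC (hh ▸ hwC)
  have hwy_ne : w ≠ y := fun hh => hyC (hh ▸ hwC)
  -- adjacency of u w
  have huw_adj : G.Adj u w := hclique huC hwC huw
  -- card V = 4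
  have hV4 : Fintype.card V = 4 := by
    have : (Finset.univ : Finset V) = {u, w, x, y} := by
      ext z
      simp only [Finset.mem_univ, true_iff, Finset.mem_insert, Finset.mem_singleton]
      exact huniv z
    rw [← Finset.card_univ, this]
    rw [Finset.card_insert_of_notMem (by simp [huw, hux_ne, huy_ne]),
      Finset.card_insert_of_notMem (by simp [hwx_ne, hwy_ne]),
      Finset.card_insert_of_notMem (by simp [hxy])]
    simp
  refine ⟨by omega, rfl, ?_⟩
  have hbij : Function.Bijective ![u, w, y, x] :=
    (Fintype.bijective_iff_injective_and_card _).2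
      ⟨aux_inj u w y x huw hux_ne huy_ne hwx_ne hwy_ne hxy, by rw [hV4, Fintype.card_fin]⟩
  exact ⟨(⟨Equiv.ofBijective _ hbij,
    @fun i j => aux_adj G u w y x huw_adj hux hwy hxy_adj hnuy hnwx i j⟩ :
      cycleGraph 4 ≃g G).symm⟩
end

section
/- Let G be a finite group, let S ⊆ G be an inverse-closed subset not containing the identity, and consider the Cayley graph Cay(G,S). Suppose C is a subgroup of G that is a regular clique of Cay(G,S) with nexus a. Then |S| = ([G : C] − 1)·a + |C| − 1, where [G : C] is the index of C in G. -/
open Finset SimpleGraph Matrix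

/-- Proposition 4.2: let Cay(G,S) be a Cayley graph and C ≤ G a subgroup which is a regular
clique with nexus a; then |S| = ([G : C] - 1)·a + |C| - 1. -/
theorem cayley_subgroup_regular_clique {G : Type*} [Group G] [Fintype G] [DecidableEq G]
    (S : Finset G) (Γ : SimpleGraph G) [DecidableRel Γ.Adj]
    (hSinv : ∀ s ∈ S, s⁻¹ ∈ S) (hS1 : (1 : G) ∉ S)
    (hadj : ∀ x y : G, Γ.Adj x y ↔ x * y⁻¹ ∈ S)
    (H : Subgroup G) (C : Finset G) (hHC : (C : Set G) = (H : Set G)) (a : ℕ)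
    (hC : Γ.IsRegularCliqueWithNexus C a) :
    (S.card : ℤ) = ((H.index : ℤ) - 1) * a + C.card - 1 := by
  classical
  have hmemC : ∀ x : G, x ∈ C ↔ x ∈ H := by
    intro x
    constructor <;> intro hx
    · have : x ∈ (C : Set G) := hx
      rwa [hHC] at this
    · have : x ∈ (C : Set G) := by rw [hHC]; exact hx
      exact_mod_cast this
  have h1H : (1 : G) ∈ C := (hmemC 1).2 H.one_mem
  set n := H.index with hn
  set c := C.card with hcdef
  set m := (Cᶜ.filter fun v => Γ.Adj 1 v).card with hm
  -- card of C equals card of H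
  have hCfin : C = (H : Set G).toFinset := by
    apply Finset.coe_injective
    rw [hHC, Set.coe_toFinset]
  have hCcard : c = Fintype.card H := by
    rw [hcdef, hCfin, Set.toFinset_card]
    simp
  have hGcard : Fintype.card G = n * c := by
    rw [hCcard, hn, ← Nat.card_eq_fintype_card, ← Nat.card_eq_fintype_card]
    exact (H.index_mul_card).symm
  have hc1 : 1 ≤ c := Finset.card_pos.mpr ⟨1, h1H⟩
  have hn1 : 1 ≤ n := Nat.one_le_iff_ne_zero.mpr (Subgroup.index_ne_zero_of_finite)
  -- each u ∈ C has exactly m neighbors outside C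
  have key : ∀ u ∈ C, (Cᶜ.filter fun v => Γ.Adj v u).card = m := by
    intro u hu
    have huH : u ∈ H := (hmemC u).1 hu
    apply Finset.card_bij (fun v _ => v * u⁻¹)
    · intro v hv
      simp only [Finset.mem_filter, Finset.mem_compl] at hv ⊢
      obtain ⟨hv1, hv2⟩ := hv
      constructor
      · intro hmem
        apply hv1
        have : v * u⁻¹ ∈ H := (hmemC _).1 hmem
        exact (hmemC v).2 (by simpa using H.mul_mem this huH)
      · rw [hadj] at hv2 ⊢
        have : v * u⁻¹ ∈ S := by simpa using hv2
        have := hSinv _ this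
        simpa [_root_.mul_inv_rev] using this
    · intro v hv w hw hvw
      exact mul_right_cancel hvw
    · intro w hw
      refine ⟨w * u, ?_, by simp⟩
      simp only [Finset.mem_filter, Finset.mem_compl] at hw ⊢
      obtain ⟨hw1, hw2⟩ := hw
      constructor
      · intro hmem
        apply hw1
        have : w * u ∈ H := (hmemC _).1 hmem
        exact (hmemC w).2 (by simpa using H.mul_mem this (H.inv_mem huH))
      · rw [hadj] at hw2 ⊢
        have : w⁻¹ ∈ S := by simpa using hw2
        have := hSinv _ this
        simpa using this
  -- double counting edges between C and its complement
  have hsum : (Fintype.card G - c) * a = c * m := by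
    have h1 : ∑ v ∈ Cᶜ, (C.filter fun u => Γ.Adj v u).card
        = ∑ u ∈ C, (Cᶜ.filter fun v => Γ.Adj v u).card := by
      simp_rw [Finset.card_filter]
      exact Finset.sum_comm
    have h2 : ∑ v ∈ Cᶜ, (C.filter fun u => Γ.Adj v u).card = (Fintype.card G - c) * a := by
      rw [Finset.sum_congr rfl fun v hv => hC.2 v (Finset.mem_compl.1 hv)]
      rw [Finset.sum_const, Finset.card_compl, smul_eq_mul, hcdef]
    have h3 : ∑ u ∈ C, (Cᶜ.filter fun v => Γ.Adj v u).card = c * m := by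
      rw [Finset.sum_congr rfl key, Finset.sum_const, smul_eq_mul, hcdef]
    rw [← h2, h1, h3]
  have hmval : m = (n - 1) * a := by
    have h4 : c * ((n - 1) * a) = c * m := by
      rw [← hsum, hGcard]
      have : n * c - c = (n - 1) * c := by
        rw [Nat.sub_one_mul, Nat.mul_comm]
      rw [this]; ring
    exact (Nat.eq_of_mul_eq_mul_left (by omega) h4).symm
  -- degree of 1 is |S|
  have hfilt : Finset.univ.filter (fun y => Γ.Adj 1 y) = S := by
    ext y
    simp only [Finset.mem_filter, Finset.mem_univ, true_and, hadj, one_mul]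
    constructor
    · intro h; simpa using hSinv _ h
    · intro h; exact hSinv _ h
  have hCfilt : C.filter (fun y => Γ.Adj 1 y) = C.erase 1 := by
    ext y
    simp only [Finset.mem_filter, Finset.mem_erase]
    constructor
    · rintro ⟨hy, hadj1⟩
      exact ⟨fun h => Γ.irrefl (h ▸ hadj1), hy⟩
    · rintro ⟨hne, hy⟩
      exact ⟨hy, hC.1 h1H hy (Ne.symm hne)⟩
  have hScard : S.card = (c - 1) + m := by
    rw [← hfilt]
    have hsplit : Finset.univ.filter (fun y => Γ.Adj 1 y)
        = C.filter (fun y => Γ.Adj 1 y) ∪ Cᶜ.filter (fun y => Γ.Adj 1 y) := by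
      rw [← Finset.filter_union, Finset.union_compl]
    rw [hsplit, Finset.card_union_of_disjoint
      (Finset.disjoint_filter_filter disjoint_compl_right)]
    rw [hCfilt, Finset.card_erase_of_mem h1H, ← hcdef, ← hm]
  rw [hScard, hmval]
  push_cast [Nat.cast_sub hc1, Nat.cast_sub hn1]
  ring
end
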